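/- The chromatic number of the graph F_n^s equals ⌈n/a⌉ = s + ⌈b/a⌉, where n = as + b with a ≥ 2 and 0 ≤ b ≤ s-1. -/

import Mathlib

/-- Cyclic distance `min (|x-y|, n - |x-y|)` on `ℤ/nℤ` for `x, y ∈ {1,…,n}`. -/
def cdist (n x y : ℕ) : ℕ := min (max x y - min x y) (n - (max x y - min x y))

/-- The graph `F_n^s` on vertex set `[n] = {1,…,n}`: distinct `x, y` are adjacent
iff their cyclic distance is `< s`. -/
def Fgraph (n s : ℕ) : SimpleGraph ℕ :=
  SimpleGraph.fromRel (fun x y => x ∈ Finset.Icc 1 n ∧ y ∈ Finset.Icc 1 n ∧ cdist n x y < s)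

/-!
A colour class of `F_n^s` is a set of points of the `n`-cycle at pairwise cyclic distance at
least `s`, so the arcs of length `s` starting at its points are disjoint and it has at most
`⌊n/s⌋ = a` points; hence `n ≤ a χ`. Conversely, cut the cycle into the `a` arcs
`[⌊in/a⌋, ⌊(i+1)n/a⌋)`, whose lengths lie between `⌊n/a⌋ ≥ s` and `⌈n/a⌉`, and colour each
vertex by its position in its arc: two vertices of the same colour in different arcs are
separated by at least one whole arc in either direction around the cycle.
-/

open Finset

lemma cdist_comm (n x y : ℕ) : cdist n x y = cdist n y x := by
  unfold cdist; rw [max_comm, min_comm x y]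

lemma Fgraph_adj {n s x y : ℕ} :
    (Fgraph n s).Adj x y ↔ x ≠ y ∧ x ∈ Icc 1 n ∧ y ∈ Icc 1 n ∧ cdist n x y < s := by
  rw [Fgraph, SimpleGraph.fromRel_adj, cdist_comm n y x]
  tauto

lemma cdist_lt_of_add_modEq {n s x y u v : ℕ} (hx : x ≤ n) (hy : y ≤ n) (hu : u < s)
    (hv : v < s) (h : x + u ≡ y + v [MOD n]) : cdist n x y < s := by
  obtain ⟨k, hk⟩ := Nat.modEq_iff_dvd.mp h
  push_cast at hk
  unfold cdist
  by_cases hsn : s ≤ n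
  · have hk1 : k < 2 := by
      by_contra! hk2
      nlinarith
    have hk2 : -2 < k := by
      by_contra! hk2
      nlinarith
    interval_cases k <;> omega
  · omega

lemma card_mul_le_of_pairwise_le_cdist {n s : ℕ} {S : Finset ℕ} (hS : ∀ x ∈ S, x ≤ n)
    (hsn : s ≤ n) (hsep : (S : Set ℕ).Pairwise fun x y => s ≤ cdist n x y) :
    #S * s ≤ n := by
  obtain rfl | hn := Nat.eq_zero_or_pos n
  · simp [Nat.le_zero.mp hsn]
  let arc : ℕ → Finset ℕ := fun x => (range s).image fun u => (x + u) % n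
  have harc_card (x : ℕ) : #(arc x) = s := by
    rw [card_image_of_injOn, card_range]
    intro u hu v hv huv
    simp only [coe_range, Set.mem_Iio] at hu hv
    exact (Nat.ModEq.add_left_cancel' x huv).eq_of_lt_of_lt (by omega) (by omega)
  have hdisj : (S : Set ℕ).PairwiseDisjoint arc := by
    intro x hx y hy hxy
    simp only [Function.onFun, disjoint_left, arc, mem_image, mem_range]
    rintro _ ⟨u, hu, rfl⟩ ⟨v, hv, huv⟩
    exact (hsep hx hy hxy).not_gt (cdist_lt_of_add_modEq (hS x hx) (hS y hy) hu hv huv.symm)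
  calc #S * s = #(S.biUnion arc) := by
        rw [card_biUnion hdisj, sum_congr rfl fun x _ => harc_card x, sum_const, smul_eq_mul]
    _ ≤ #(range n) := card_le_card fun z hz => by
        obtain ⟨x, -, hz⟩ := mem_biUnion.mp hz
        obtain ⟨u, -, rfl⟩ := mem_image.mp hz
        exact mem_range.mpr (Nat.mod_lt _ hn)
    _ = n := card_range n

lemma le_mul_div_of_Fgraph_colorable {n s c : ℕ} (hs : 0 < s) (hsn : s ≤ n)
    (h : (Fgraph n s).Colorable c) : n ≤ c * (n / s) := by
  obtain ⟨C⟩ := h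
  have hclass (i : Fin c) : #{x ∈ Icc 1 n | C x = i} ≤ n / s := by
    rw [Nat.le_div_iff_mul_le hs]
    refine card_mul_le_of_pairwise_le_cdist (fun x hx => by simp at hx; omega) hsn ?_
    intro x hx y hy hxy
    simp only [coe_filter, Set.mem_ofPred_eq] at hx hy
    by_contra! hlt
    exact C.valid (Fgraph_adj.mpr ⟨hxy, hx.1, hy.1, hlt⟩) (hx.2.trans hy.2.symm)
  calc n = #(Icc 1 n) := by simp
    _ ≤ n / s * #(univ : Finset (Fin c)) :=
        card_le_mul_card_image_of_maps_to (fun x _ => mem_univ (C x)) _ fun i _ => hclass i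
    _ = c * (n / s) := by simp [mul_comm]

lemma Fgraph_colorable_of_le_cdist {n s k : ℕ} (hk : 0 < k) (f : ℕ → ℕ)
    (hf : ∀ x ∈ Icc 1 n, f x < k)
    (hsep : ∀ x ∈ Icc 1 n, ∀ y ∈ Icc 1 n, x ≠ y → f x = f y → s ≤ cdist n x y) :
    (Fgraph n s).Colorable k := by
  -- the cap `k - 1` only matters off `[1, n]`, where `Fgraph n s` has no edges
  refine ⟨.mk (fun x => ⟨min (f x) (k - 1), by omega⟩) fun {x y} hxy hcol => ?_⟩
  obtain ⟨hne, hx, hy, hlt⟩ := Fgraph_adj.mp hxy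
  have := hf x hx
  have := hf y hy
  simp only [Fin.mk.injEq] at hcol
  exact (hsep x hx y hy hne (by omega)).not_gt hlt

section Blocks

variable {st : ℕ → ℕ} {a n : ℕ}

def blockIndex (st : ℕ → ℕ) (a p : ℕ) : ℕ := Nat.findGreatest (fun i => st i ≤ p) a

lemma blockIndex_spec (h0 : st 0 = 0) (ha : st a = n) {p : ℕ} (hp : p < n) :
    blockIndex st a p < a ∧ st (blockIndex st a p) ≤ p ∧ p < st (blockIndex st a p + 1) := by
  have hle : st (blockIndex st a p) ≤ p :=
    Nat.findGreatest_spec (P := fun i => st i ≤ p) (Nat.zero_le a) (by simp [h0])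
  have hlt : blockIndex st a p < a :=
    (Nat.findGreatest_le a).lt_of_ne fun h => by rw [blockIndex, h, ha] at hle; omega
  exact ⟨hlt, hle, not_le.mp (Nat.findGreatest_is_greatest (P := fun i => st i ≤ p)
    (Nat.lt_succ_self _) hlt)⟩

lemma Fgraph_colorable_of_blocks {s k : ℕ} (hst : Monotone st) (h0 : st 0 = 0) (ha : st a = n)
    (hlen : ∀ i < a, st i + s ≤ st (i + 1) ∧ st (i + 1) ≤ st i + k) (hk : 0 < k) :
    (Fgraph n s).Colorable k := by
  have hsep_of_lt (x y : ℕ) (hx : x ∈ Icc 1 n) (hy : y ∈ Icc 1 n)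
      (hxy : blockIndex st a (x - 1) < blockIndex st a (y - 1))
      (hcol : x - 1 - st (blockIndex st a (x - 1)) = y - 1 - st (blockIndex st a (y - 1))) :
      s ≤ cdist n x y := by
    rw [mem_Icc] at hx hy
    obtain ⟨hi, hxi, hxi'⟩ := blockIndex_spec h0 ha (p := x - 1) (by omega)
    obtain ⟨hj, hyj, hyj'⟩ := blockIndex_spec h0 ha (p := y - 1) (by omega)
    have := hlen _ hi
    have := hlen _ hj
    have := hst (show _ + 1 ≤ _ from hxy)
    have := ha ▸ hst (show _ + 1 ≤ a from hj)
    unfold cdist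
    omega
  refine Fgraph_colorable_of_le_cdist hk (fun x => x - 1 - st (blockIndex st a (x - 1))) ?_ ?_
  · intro x hx
    rw [mem_Icc] at hx
    obtain ⟨hi, hxi, hxi'⟩ := blockIndex_spec h0 ha (p := x - 1) (by omega)
    have := hlen _ hi
    omega
  · intro x hx y hy hne hcol
    rcases lt_trichotomy (blockIndex st a (x - 1)) (blockIndex st a (y - 1)) with h | h | h
    · exact hsep_of_lt x y hx hy h hcol
    · rw [mem_Icc] at hx hy
      have hxi := (blockIndex_spec h0 ha (p := x - 1) (by omega)).2.1
      have hyi := (blockIndex_spec h0 ha (p := y - 1) (by omega)).2.1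
      rw [h] at hcol hxi
      omega
    · rw [cdist_comm]
      exact hsep_of_lt y x hy hx h hcol.symm

end Blocks

lemma Nat.add_div_le_add_ceil_div (x y a : ℕ) : (x + y) / a ≤ x / a + (y + a - 1) / a := by
  obtain rfl | ha := Nat.eq_zero_or_pos a
  · simp
  generalize ht : y + a - 1 = t
  rw [← Nat.lt_succ_iff, Nat.div_lt_iff_lt_mul ha]
  have := Nat.div_add_mod x a
  have := Nat.mod_lt x ha
  have := Nat.lt_mul_div_succ t ha
  have : y + a = t + 1 := by omega
  nlinarith

lemma Fgraph_colorable_ceil_div {a n s : ℕ} (ha : 0 < a) (hn : 0 < n) (hs : s ≤ n / a) :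
    (Fgraph n s).Colorable ((n + a - 1) / a) := by
  refine Fgraph_colorable_of_blocks (st := fun i => i * n / a) (a := a)
    (fun i j hij => Nat.div_le_div_right (Nat.mul_le_mul_right n hij)) (by simp)
    (Nat.mul_div_cancel_left n ha) (fun i _ => ⟨?_, ?_⟩) (Nat.div_pos (by omega) ha)
  · calc i * n / a + s ≤ i * n / a + n / a := by omega
      _ ≤ (i + 1) * n / a := by rw [add_mul, one_mul]; exact Nat.div_add_div_le_add_div
  · rw [add_mul, one_mul]
    exact Nat.add_div_le_add_ceil_div _ _ _

/-- With `n = a*s + b`, `0 ≤ b ≤ s-1`, `a ≥ 2`: the chromatic number of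
`F_n^s` equals `⌈n/a⌉`, which equals `s + ⌈b/a⌉`. -/
theorem stmt_6 (s a b n : ℕ) (hs : 2 ≤ s) (ha : 2 ≤ a) (hb : b ≤ s - 1)
    (hn : n = a * s + b) :
    (Fgraph n s).chromaticNumber = (((n + a - 1) / a : ℕ) : ℕ∞) ∧
    (n + a - 1) / a = s + (b + a - 1) / a := by
  have hsn : s ≤ n := by nlinarith
  have hn_div_s : n / s = a :=
    Nat.div_eq_of_lt_le (by rw [hn]; omega) (by rw [hn, add_mul, one_mul]; omega)
  have hs_le : s ≤ n / a := (Nat.le_div_iff_mul_le (by omega)).2 (by rw [hn]; nlinarith)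
  refine ⟨le_antisymm ?_ ?_, ?_⟩
  · exact (Fgraph_colorable_ceil_div (by omega) (by omega) hs_le).chromaticNumber_le
  · refine SimpleGraph.le_chromaticNumber_iff_colorable.mpr fun c hc => ?_
    have hnc := le_mul_div_of_Fgraph_colorable (by omega) hsn hc
    rw [hn_div_s] at hnc
    exact_mod_cast (ceilDiv_le_iff_le_mul (by omega : 0 < a)).2 (by linarith)
  · rw [hn, show a * s + b + a - 1 = a * s + (b + a - 1) by omega, Nat.mul_add_div (by omega)]
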